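/- Let f : A ⥤ B be a functor and let P_f be the full subcategory of B/f spanned by the objects (x, a, α) with α an isomorphism, with restricted projections p : P_f ⥤ A, q : P_f ⥤ B and restricted canonical transformation λ : q ⟶ p ⋙ f (a natural isomorphism). Then: (1) for every category X, functors r : X ⥤ A, s : X ⥤ B and natural isomorphism φ : s ≅ r ⋙ f there is a unique functor t : X ⥤ P_f with t ⋙ p = r, t ⋙ q = s and whiskerLeft t λ = φ.hom; (2) given t, t' : X ⥤ P_f and natural transformations θ_p : t ⋙ p ⟶ t' ⋙ p, θ_q : t ⋙ q ⟶ t' ⋙ q satisfying θ_q ≫ whiskerLeft t' λ = whiskerLeft t λ ≫ whiskerRight θ_p f, there is a unique φ : t ⟶ t' with whiskerRight φ p = θ_p and whiskerRight φ q = θ_q. Thus P_f is the pseudolimit of the arrow f in the 2-category of categories. -/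

import Mathlib

open CategoryTheory

universe v₁ v₂ v₃ u₁ u₂ u₃

variable {A : Type u₁} [Category.{v₁} A] {B : Type u₂} [Category.{v₂} B]

/-- The pseudolimit `P_f` of the arrow `f`: the full subcategory of the comma
category `B/f` spanned by the objects whose structure morphism is invertible. -/
abbrev PseudoLimitArrow (f : A ⥤ B) : Type max u₁ u₂ v₂ :=
  ObjectProperty.FullSubcategory (fun X : Comma (𝟭 B) f => IsIso X.hom)

/-- The restricted projection `p : P_f ⥤ A`. -/
def pProj (f : A ⥤ B) : PseudoLimitArrow f ⥤ A :=
  ObjectProperty.ι _ ⋙ Comma.snd (𝟭 B) f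

/-- The restricted projection `q : P_f ⥤ B`. -/
def qProj (f : A ⥤ B) : PseudoLimitArrow f ⥤ B :=
  ObjectProperty.ι _ ⋙ Comma.fst (𝟭 B) f

/-- The restricted canonical transformation `λ : q ⟶ p ⋙ f`. -/
def lamProj (f : A ⥤ B) : qProj f ⟶ pProj f ⋙ f :=
  Functor.whiskerLeft (ObjectProperty.ι _) (Comma.natTrans (𝟭 B) f)

/-!
A pseudo-cone `(r, s, φ)` over `f` with vertex `X` is, pointwise, an object `(s x, r x, φ x)` of
`P_f`, and this assignment is functorial; conversely every `t : X ⥤ P_f` is recovered from its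
pseudo-cone `(t ⋙ p, t ⋙ q, t λ)` by eta for structures, which gives uniqueness. Morphisms of `P_f`
are pairs of morphisms compatible with the structure maps, so a 2-cell `t ⟶ t'` is the same as a
compatible pair `(θp, θq)`.
-/

namespace PseudoLimitArrow

variable {f : A ⥤ B}

lemma hom_ext {c d : PseudoLimitArrow f} {u v : c ⟶ d}
    (hp : (pProj f).map u = (pProj f).map v) (hq : (qProj f).map u = (qProj f).map v) :
    u = v :=
  InducedCategory.hom_ext (CommaMorphism.ext hq hp)

instance isIso_lamProj : IsIso (lamProj f) :=
  have (c : PseudoLimitArrow f) : IsIso ((lamProj f).app c) := c.property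
  NatIso.isIso_of_isIso_app _

variable {X : Type u₃} [Category.{v₃} X]

def lift (r : X ⥤ A) (s : X ⥤ B) (φ : s ≅ r ⋙ f) : X ⥤ PseudoLimitArrow f where
  obj x := ⟨⟨s.obj x, r.obj x, φ.hom.app x⟩, inferInstance⟩
  map g := InducedCategory.homMk ⟨s.map g, r.map g, by simp⟩

lemma lift_comp_pProj (r : X ⥤ A) (s : X ⥤ B) (φ : s ≅ r ⋙ f) :
    lift r s φ ⋙ pProj f = r :=
  rfl

lemma lift_comp_qProj (r : X ⥤ A) (s : X ⥤ B) (φ : s ≅ r ⋙ f) :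
    lift r s φ ⋙ qProj f = s :=
  rfl

lemma whiskerLeft_lift_lamProj (r : X ⥤ A) (s : X ⥤ B) (φ : s ≅ r ⋙ f) :
    Functor.whiskerLeft (lift r s φ) (lamProj f) = φ.hom :=
  rfl

lemma eq_lift (t : X ⥤ PseudoLimitArrow f) (φ : t ⋙ qProj f ≅ t ⋙ pProj f ⋙ f)
    (h : Functor.whiskerLeft t (lamProj f) = φ.hom) :
    t = lift (t ⋙ pProj f) (t ⋙ qProj f) φ := by
  -- by structure eta, `t` is definitionally the lift of its own pseudo-cone
  obtain rfl : φ = asIso (Functor.whiskerLeft t (lamProj f)) := Iso.ext h.symm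
  rfl

def liftNatTrans {t t' : X ⥤ PseudoLimitArrow f}
    (θp : t ⋙ pProj f ⟶ t' ⋙ pProj f) (θq : t ⋙ qProj f ⟶ t' ⋙ qProj f)
    (w : θq ≫ Functor.whiskerLeft t' (lamProj f) =
      Functor.whiskerLeft t (lamProj f) ≫ Functor.whiskerRight θp f) : t ⟶ t' where
  app x := InducedCategory.homMk ⟨θq.app x, θp.app x, NatTrans.congr_app w x⟩
  naturality _ _ g := hom_ext (θp.naturality g) (θq.naturality g)

lemma natTrans_ext {t t' : X ⥤ PseudoLimitArrow f} {φ ψ : t ⟶ t'}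
    (hp : Functor.whiskerRight φ (pProj f) = Functor.whiskerRight ψ (pProj f))
    (hq : Functor.whiskerRight φ (qProj f) = Functor.whiskerRight ψ (qProj f)) : φ = ψ :=
  NatTrans.ext (funext fun x => hom_ext (NatTrans.congr_app hp x) (NatTrans.congr_app hq x))

end PseudoLimitArrow

open PseudoLimitArrow in
/-- The one- and two-dimensional universal properties of `P_f` as the pseudolimit
of the arrow `f` in the 2-category of categories. -/
theorem pseudolimit_universal_property (f : A ⥤ B)
    {X : Type u₃} [Category.{v₃} X] :
    -- (1) one-dimensional universal property, for pseudo-cones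
    (∀ (r : X ⥤ A) (s : X ⥤ B) (φ : s ≅ r ⋙ f),
      ∃! t : X ⥤ PseudoLimitArrow f,
        ∃ (h1 : t ⋙ pProj f = r) (h2 : t ⋙ qProj f = s),
          Functor.whiskerLeft t (lamProj f) =
            eqToHom h2 ≫ φ.hom ≫
              eqToHom (show r ⋙ f = t ⋙ (pProj f ⋙ f) by rw [← Functor.assoc, h1])) ∧
    -- (2) two-dimensional universal property
    (∀ (t t' : X ⥤ PseudoLimitArrow f)
      (θp : t ⋙ pProj f ⟶ t' ⋙ pProj f) (θq : t ⋙ qProj f ⟶ t' ⋙ qProj f),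
      θq ≫ Functor.whiskerLeft t' (lamProj f) =
          Functor.whiskerLeft t (lamProj f) ≫ Functor.whiskerRight θp f →
        ∃! φ : t ⟶ t',
          Functor.whiskerRight φ (pProj f) = θp ∧ Functor.whiskerRight φ (qProj f) = θq) := by
  refine ⟨fun r s φ => ?_, fun t t' θp θq w => ?_⟩
  · -- both `eqToHom`s in the statement are identities for `t := lift r s φ`
    have hlam : φ.hom = 𝟙 s ≫ φ.hom ≫ 𝟙 (r ⋙ f) := by simp
    refine ⟨lift r s φ, ⟨lift_comp_pProj r s φ, lift_comp_qProj r s φ,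
      (whiskerLeft_lift_lamProj r s φ).trans hlam⟩, ?_⟩
    rintro t ⟨rfl, rfl, h⟩
    exact eq_lift t φ (by simpa using h)
  · exact ⟨liftNatTrans θp θq w, ⟨rfl, rfl⟩, fun ψ ⟨hp, hq⟩ => natTrans_ext hp hq⟩
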